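/- Let n = p+q, λ, μ ∈ ℝ, δ = μ − λ, let g = diag(1,…,1,−1,…,−1), and fix r ∈ {1,…,n}; let X̄_r = x_j x^j ∂/∂x^r' (precisely, X̄_r^k = x_j x^j δ_r^k − 2 x_r x^k where x_i = g_{ij}x^j). Then for every second-order operator A with coefficients (A₂, A₁, A₀), the operator L_{X̄_r}^μ ∘ A − A ∘ L_{X̄_r}^λ is a second-order operator whose coefficients are: Ã₂^{ij} = (L_{X̄_r}^δ A₂)^{ij}; Ã₁^i = (L_{X̄_r}^δ A₁)^i − 2 δ^i_r g_{kℓ}A₂^{kℓ} + 4(1+nλ) g_{ar}A₂^{ai}; Ã₀ = L_{X̄_r}^δ A₀ + 2nλ g_{ar}A₁^a (summation over repeated indices). -/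

import Mathlib

open scoped BigOperators

noncomputable section

/-- Partial derivative of a function on `ℝⁿ` in the `i`-th coordinate direction. -/
def pd {n : ℕ} (i : Fin n) (f : (Fin n → ℝ) → ℝ) : (Fin n → ℝ) → ℝ :=
  fun x => fderiv ℝ f x (Pi.single i 1)

/-- Diagonal entries of the flat metric of signature `(p, n−p)`. -/
def sgn (p : ℕ) {n : ℕ} (i : Fin n) : ℝ := if (i : ℕ) < p then 1 else -1

/-- Flat metric `g_{ij} = g^{ij} = diag(1,…,1,−1,…,−1)`. -/
def gmet (p : ℕ) {n : ℕ} (i j : Fin n) : ℝ := if i = j then sgn p i else 0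

/-- Divergence of a vector field on `ℝⁿ`. -/
def divg {n : ℕ} (X : Fin n → (Fin n → ℝ) → ℝ) : (Fin n → ℝ) → ℝ :=
  fun x => ∑ k, pd k (X k) x

/-- Lie derivative of a weight-`l` density (in the trivialization). -/
def lieF {n : ℕ} (X : Fin n → (Fin n → ℝ) → ℝ) (l : ℝ) (f : (Fin n → ℝ) → ℝ) :
    (Fin n → ℝ) → ℝ :=
  fun x => (∑ k, X k x * pd k f x) + l * divg X x * f x

/-- Weight-`d` action of a vector field on the degree-2 component of a symbol. -/
def lieS2 {n : ℕ} (X : Fin n → (Fin n → ℝ) → ℝ) (d : ℝ)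
    (P2 : Fin n → Fin n → (Fin n → ℝ) → ℝ) : Fin n → Fin n → (Fin n → ℝ) → ℝ :=
  fun i j x => (∑ k, X k x * pd k (P2 i j) x) - (∑ k, P2 k j x * pd k (X i) x)
    - (∑ k, P2 i k x * pd k (X j) x) + d * divg X x * P2 i j x

/-- Weight-`d` action of a vector field on the degree-1 component of a symbol. -/
def lieS1 {n : ℕ} (X : Fin n → (Fin n → ℝ) → ℝ) (d : ℝ)
    (P1 : Fin n → (Fin n → ℝ) → ℝ) : Fin n → (Fin n → ℝ) → ℝ :=
  fun i x => (∑ k, X k x * pd k (P1 i) x) - (∑ k, P1 k x * pd k (X i) x)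
    + d * divg X x * P1 i x

/-- The second-order differential operator with coefficients `(A2, A1, A0)`. -/
def op2 {n : ℕ} (A2 : Fin n → Fin n → (Fin n → ℝ) → ℝ) (A1 : Fin n → (Fin n → ℝ) → ℝ)
    (A0 : (Fin n → ℝ) → ℝ) (f : (Fin n → ℝ) → ℝ) : (Fin n → ℝ) → ℝ :=
  fun x => (∑ i, ∑ j, A2 i j x * pd i (pd j f) x) + (∑ i, A1 i x * pd i f x) + A0 x * f x

/-- Inversion generators `X̄_r` with components `X̄_r^k = x_j x^j δ_r^k − 2 x_r x^k`,
where `x_i = g_{ij} x^j`. -/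
def invX (p : ℕ) {n : ℕ} (r : Fin n) : Fin n → (Fin n → ℝ) → ℝ :=
  fun k x => (if k = r then ∑ j, sgn p j * x j ^ 2 else 0) - 2 * sgn p r * x r * x k

namespace Inv

variable {n : ℕ}

/-! ### Smoothness toolbox -/

@[fun_prop]
theorem contDiff_pd {f : (Fin n → ℝ) → ℝ} (hf : ContDiff ℝ (⊤ : ℕ∞) f) (i : Fin n) :
    ContDiff ℝ (⊤ : ℕ∞) (pd i f) :=
  (hf.fderiv_right (by simp)).clm_apply contDiff_const

@[fun_prop]
theorem contDiff_coord (j : Fin n) : ContDiff ℝ (⊤ : ℕ∞) (fun y : Fin n → ℝ => y j) :=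
  (ContinuousLinearMap.proj j : (Fin n → ℝ) →L[ℝ] ℝ).contDiff

@[fun_prop]
theorem contDiff_sum' {ι : Type*} (s : Finset ι) (F : ι → (Fin n → ℝ) → ℝ)
    (h : ∀ i, ContDiff ℝ (⊤ : ℕ∞) (F i)) : ContDiff ℝ (⊤ : ℕ∞) (fun x => ∑ i ∈ s, F i x) :=
  ContDiff.sum (fun i _ => h i)

@[fun_prop]
theorem contDiff_invX (p : ℕ) (r k : Fin n) : ContDiff ℝ (⊤ : ℕ∞) (invX p r k) := by
  unfold invX
  by_cases h : k = r <;> simp only [h, if_pos, if_neg, if_true, if_false] <;> fun_prop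

@[fun_prop]
theorem contDiff_divg {X : Fin n → (Fin n → ℝ) → ℝ} (hX : ∀ k, ContDiff ℝ (⊤ : ℕ∞) (X k)) :
    ContDiff ℝ (⊤ : ℕ∞) (divg X) := by
  unfold divg; fun_prop

theorem cdiff {f : (Fin n → ℝ) → ℝ} (hf : ContDiff ℝ (⊤ : ℕ∞) f) (x : Fin n → ℝ) :
    DifferentiableAt ℝ f x := (hf.differentiable (by simp)).differentiableAt

/-! ### pd calculus -/

theorem pd_add (i : Fin n) {f g : (Fin n → ℝ) → ℝ} {x : Fin n → ℝ}
    (hf : DifferentiableAt ℝ f x) (hg : DifferentiableAt ℝ g x) :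
    pd i (fun y => f y + g y) x = pd i f x + pd i g x := by
  simp [pd, fderiv_fun_add hf hg]

theorem pd_sub (i : Fin n) {f g : (Fin n → ℝ) → ℝ} {x : Fin n → ℝ}
    (hf : DifferentiableAt ℝ f x) (hg : DifferentiableAt ℝ g x) :
    pd i (fun y => f y - g y) x = pd i f x - pd i g x := by
  simp [pd, fderiv_fun_sub hf hg]

theorem pd_mul (i : Fin n) {f g : (Fin n → ℝ) → ℝ} {x : Fin n → ℝ}
    (hf : DifferentiableAt ℝ f x) (hg : DifferentiableAt ℝ g x) :
    pd i (fun y => f y * g y) x = pd i f x * g x + f x * pd i g x := by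
  simp [pd, fderiv_fun_mul hf hg]; ring

theorem pd_sum (i : Fin n) {ι : Type*} (s : Finset ι) {F : ι → (Fin n → ℝ) → ℝ} {x : Fin n → ℝ}
    (hF : ∀ k ∈ s, DifferentiableAt ℝ (F k) x) :
    pd i (fun y => ∑ k ∈ s, F k y) x = ∑ k ∈ s, pd i (F k) x := by
  simp [pd, fderiv_fun_sum hF]

theorem pd_const_mul (i : Fin n) (c : ℝ) {f : (Fin n → ℝ) → ℝ} {x : Fin n → ℝ}
    (hf : DifferentiableAt ℝ f x) :
    pd i (fun y => c * f y) x = c * pd i f x := by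
  simp [pd, fderiv_const_mul hf c]

theorem pd_const (i : Fin n) (c : ℝ) (x : Fin n → ℝ) : pd i (fun _ => c) x = 0 := by
  simp [pd]

theorem pd_coord (i j : Fin n) (x : Fin n → ℝ) :
    pd i (fun y => y j) x = if j = i then 1 else 0 := by
  have h : (fun y : Fin n → ℝ => y j) = fun y => (ContinuousLinearMap.proj j : (Fin n → ℝ) →L[ℝ] ℝ) y := rfl
  rw [pd, h, (ContinuousLinearMap.proj j : (Fin n → ℝ) →L[ℝ] ℝ).fderiv]
  simp [Pi.single_apply]

theorem pd_comm {f : (Fin n → ℝ) → ℝ} (hf : ContDiff ℝ (⊤ : ℕ∞) f) (i j : Fin n) (x : Fin n → ℝ) :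
    pd i (pd j f) x = pd j (pd i f) x := by
  have hd : Differentiable ℝ f := hf.differentiable (by simp)
  have hc : ContDiff ℝ (⊤ : ℕ∞) (fderiv ℝ f) := hf.fderiv_right (by simp)
  have hdc : DifferentiableAt ℝ (fderiv ℝ f) x := (hc.differentiable (by simp)).differentiableAt
  have key : ∀ v w : Fin n → ℝ, fderiv ℝ (fderiv ℝ f) x v w = fderiv ℝ (fderiv ℝ f) x w v :=
    second_derivative_symmetric (fun y => (hd y).hasFDerivAt) hdc.hasFDerivAt
  have expand : ∀ (a : Fin n) (v : Fin n → ℝ),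
      pd a (fun y => fderiv ℝ f y v) x = fderiv ℝ (fderiv ℝ f) x (Pi.single a 1) v := by
    intro a v
    rw [pd]
    rw [show (fun y => fderiv ℝ f y v) = fun y => (fderiv ℝ f y) ((fun _ => v) y) from rfl]
    rw [fderiv_clm_apply hdc (differentiableAt_const v)]
    simp
  show pd i (fun y => fderiv ℝ f y (Pi.single j 1)) x = pd j (fun y => fderiv ℝ f y (Pi.single i 1)) x
  rw [expand i _, expand j _, key]

/-! ### derivatives of the inversion field -/

theorem pd_invX (p : ℕ) (r k m : Fin n) (x : Fin n → ℝ) :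
    pd m (invX p r k) x = (if k = r then 2 * sgn p m * x m else 0)
      - 2 * sgn p r * ((if m = r then 1 else 0) * x k + x r * (if m = k then 1 else 0)) := by
  have h1 : pd m (fun y : Fin n → ℝ => ∑ j, sgn p j * y j ^ 2) x = 2 * sgn p m * x m := by
    rw [pd_sum m Finset.univ (fun j _ => by fun_prop)]
    have : ∀ j : Fin n, pd m (fun y : Fin n → ℝ => sgn p j * y j ^ 2) x
        = sgn p j * ((if j = m then 1 else 0) * x j + x j * (if j = m then 1 else 0)) := by
      intro j
      rw [show (fun y : Fin n → ℝ => sgn p j * y j ^ 2) = fun y => sgn p j * (y j * y j) by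
        funext y; ring]
      rw [pd_const_mul m _ (by fun_prop),
        pd_mul m (by fun_prop : DifferentiableAt ℝ (fun y : Fin n → ℝ => y j) x) (by fun_prop),
        pd_coord]
    simp only [this]
    have h2 : ∀ j : Fin n, sgn p j * ((if j = m then 1 else 0) * x j + x j * (if j = m then 1 else 0))
        = if j = m then 2 * sgn p j * x j else 0 := by
      intro j; by_cases h : j = m <;> simp [h] <;> ring
    simp only [h2, Finset.sum_ite_eq', Finset.mem_univ, if_true]
  have h2 : pd m (fun y : Fin n → ℝ => 2 * sgn p r * y r * y k) x
      = 2 * sgn p r * ((if m = r then 1 else 0) * x k + x r * (if m = k then 1 else 0)) := by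
    rw [show (fun y : Fin n → ℝ => 2 * sgn p r * y r * y k)
        = fun y => (2 * sgn p r) * (y r * y k) by funext y; ring]
    rw [pd_const_mul m _ (by fun_prop),
      pd_mul m (by fun_prop : DifferentiableAt ℝ (fun y : Fin n → ℝ => y r) x) (by fun_prop),
      pd_coord, pd_coord]
    by_cases h1 : m = r <;> by_cases h2 : m = k <;>
      simp [h1, h2, eq_comm (a := r) (b := m), eq_comm (a := k) (b := m), eq_comm (a := r) (b := k)] <;> ring
  by_cases hk : k = r
  · rw [show invX p r k = fun y => (∑ j, sgn p j * y j ^ 2) - 2 * sgn p r * y r * y k by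
      funext y; simp [invX, hk]]
    rw [pd_sub m (by fun_prop) (by fun_prop), h1, h2, if_pos hk]
  · rw [show invX p r k = fun y => (0:ℝ) - 2 * sgn p r * y r * y k by
      funext y; simp [invX, hk]]
    rw [pd_sub m (by fun_prop : DifferentiableAt ℝ (fun _ : Fin n → ℝ => (0:ℝ)) x) (by fun_prop),
      pd_const, h2, if_neg hk]

theorem divg_invX (p : ℕ) (r : Fin n) (x : Fin n → ℝ) :
    divg (invX p r) x = -(2 * n) * sgn p r * x r := by
  unfold divg
  have h : ∀ k : Fin n, pd k (invX p r k) x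
      = (if k = r then 2 * sgn p k * x k - 2 * sgn p r * x k else 0) - 2 * sgn p r * x r := by
    intro k; rw [pd_invX]; by_cases h : k = r <;> simp [h] <;> ring
  rw [Finset.sum_congr rfl (fun k _ => h k), Finset.sum_sub_distrib]
  simp only [Finset.sum_ite_eq', Finset.mem_univ, if_true, Finset.sum_const,
    Finset.card_univ, Fintype.card_fin, nsmul_eq_mul]
  ring

theorem divg_invX_fun (p : ℕ) (r : Fin n) :
    divg (invX p r) = fun x => -(2 * n) * sgn p r * x r := funext (divg_invX p r)

theorem pd_divg_invX (p : ℕ) (r i : Fin n) (x : Fin n → ℝ) :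
    pd i (divg (invX p r)) x = -(2 * n) * sgn p r * (if r = i then 1 else 0) := by
  rw [divg_invX_fun]
  rw [show (fun x : Fin n → ℝ => -(2 * (n:ℝ)) * sgn p r * x r)
      = fun x => (-(2 * (n:ℝ)) * sgn p r) * x r by funext x; ring]
  rw [pd_const_mul i _ (by fun_prop), pd_coord]

theorem pd_pd_divg_invX (p : ℕ) (r i j : Fin n) (x : Fin n → ℝ) :
    pd i (pd j (divg (invX p r))) x = 0 := by
  rw [show pd j (divg (invX p r)) = fun _ => -(2 * (n:ℝ)) * sgn p r * (if r = j then 1 else 0)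
    from funext (pd_divg_invX p r j)]
  exact pd_const i _ x

theorem pd_pd_invX (p : ℕ) (r k i j : Fin n) (x : Fin n → ℝ) :
    pd i (pd j (invX p r k)) x = (if k = r then 2 * sgn p j * (if j = i then 1 else 0) else 0)
      - 2 * sgn p r * ((if j = r then 1 else 0) * (if k = i then 1 else 0)
        + (if j = k then 1 else 0) * (if r = i then 1 else 0)) := by
  rw [show pd j (invX p r k) = fun y => ((if k = r then 2 * sgn p j * y j else 0)
      - ((2 * sgn p r * (if j = r then 1 else 0)) * y k
        + (2 * sgn p r * (if j = k then 1 else 0)) * y r)) by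
    funext y; rw [pd_invX]; ring]
  rw [pd_sub i (by by_cases h : k = r <;> simp [h] <;> fun_prop) (by fun_prop)]
  rw [pd_add i (by fun_prop) (by fun_prop)]
  rw [pd_const_mul i _ (by fun_prop), pd_const_mul i _ (by fun_prop), pd_coord, pd_coord]
  rw [show (fun y : Fin n → ℝ => if k = r then 2 * sgn p j * y j else 0)
      = fun y => (if k = r then 2 * sgn p j else (0:ℝ)) * y j by
    funext y; by_cases h : k = r <;> simp [h]]
  rw [pd_const_mul i _ (by fun_prop), pd_coord]
  by_cases h : k = r <;> by_cases h2 : j = i <;> simp [h, h2] <;> split_ifs <;> ring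

theorem pd2_swap {f : (Fin n → ℝ) → ℝ} (hf : ContDiff ℝ (⊤ : ℕ∞) f) (a b : Fin n) (y : Fin n → ℝ) :
    pd a (pd b f) y = pd b (pd a f) y := pd_comm hf a b y

theorem pd3_rot {f : (Fin n → ℝ) → ℝ} (hf : ContDiff ℝ (⊤ : ℕ∞) f) (a b c : Fin n) (y : Fin n → ℝ) :
    pd a (pd b (pd c f)) y = pd b (pd c (pd a f)) y := by
  have h1 : pd a (pd b (pd c f)) y = pd b (pd a (pd c f)) y :=
    pd_comm (contDiff_pd hf c) a b y
  have h2 : pd a (pd c f) = pd c (pd a f) := funext (pd_comm hf a c)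
  rw [h1, h2]

theorem comm3 (T : Fin n → Fin n → Fin n → ℝ) :
    ∑ m, ∑ i, ∑ j, T m i j = ∑ i, ∑ j, ∑ m, T m i j := by
  rw [Finset.sum_comm]
  exact Finset.sum_congr rfl fun i _ => Finset.sum_comm

theorem comm3' (T : Fin n → Fin n → Fin n → ℝ) :
    ∑ a, ∑ b, ∑ c, T a b c = ∑ c, ∑ a, ∑ b, T a b c :=
  (comm3 (fun c a b => T a b c)).symm

theorem hswap3 (T : Fin n → Fin n → Fin n → ℝ) :
    ∑ a, ∑ b, ∑ c, T a b c = ∑ c, ∑ b, ∑ a, T a b c :=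
  (comm3 T).trans Finset.sum_comm

theorem congr3 {T U : Fin n → Fin n → Fin n → ℝ} (h : ∀ a b c, T a b c = U a b c) :
    ∑ a, ∑ b, ∑ c, T a b c = ∑ a, ∑ b, ∑ c, U a b c :=
  Finset.sum_congr rfl fun a _ => Finset.sum_congr rfl fun b _ =>
    Finset.sum_congr rfl fun c _ => h a b c

theorem congr2 {T U : Fin n → Fin n → ℝ} (h : ∀ a b, T a b = U a b) :
    ∑ a, ∑ b, T a b = ∑ a, ∑ b, U a b :=
  Finset.sum_congr rfl fun a _ => Finset.sum_congr rfl fun b _ => h a b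

theorem commutator (X : Fin n → (Fin n → ℝ) → ℝ) (hX : ∀ k, ContDiff ℝ (⊤ : ℕ∞) (X k))
    (lam mu : ℝ)
    (A2 : Fin n → Fin n → (Fin n → ℝ) → ℝ)
    (A1 : Fin n → (Fin n → ℝ) → ℝ) (A0 : (Fin n → ℝ) → ℝ)
    (hA2 : ∀ i j, ContDiff ℝ (⊤ : ℕ∞) (A2 i j)) (hA2sym : ∀ i j, A2 i j = A2 j i)
    (hA1 : ∀ i, ContDiff ℝ (⊤ : ℕ∞) (A1 i)) (hA0 : ContDiff ℝ (⊤ : ℕ∞) A0)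
    (f : (Fin n → ℝ) → ℝ) (hf : ContDiff ℝ (⊤ : ℕ∞) f) (x : Fin n → ℝ) :
    lieF X mu (op2 A2 A1 A0 f) x - op2 A2 A1 A0 (lieF X lam f) x
      = op2 (lieS2 X (mu - lam) A2)
          (fun i y => lieS1 X (mu - lam) A1 i y
            - (∑ j, ∑ k, A2 j k y * pd j (pd k (X i)) y)
            - 2 * lam * (∑ j, A2 j i y * pd j (divg X) y))
          (fun y => lieF X (mu - lam) A0 y
            - lam * (∑ i, ∑ j, A2 i j y * pd i (pd j (divg X)) y)
            - lam * (∑ i, A1 i y * pd i (divg X) y)) f x := by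
  have hdvg : ContDiff ℝ (⊤ : ℕ∞) (divg X) := contDiff_divg hX
  -- Expansion of pd of the operator applied to f
  have E1 : ∀ (m : Fin n) (y : Fin n → ℝ),
      pd m (op2 A2 A1 A0 f) y
      = (∑ i, ∑ j, (pd m (A2 i j) y * pd i (pd j f) y + A2 i j y * pd m (pd i (pd j f)) y))
        + (∑ i, (pd m (A1 i) y * pd i f y + A1 i y * pd m (pd i f) y))
        + (pd m A0 y * f y + A0 y * pd m f y) := by
    intro m y
    rw [show op2 A2 A1 A0 f = (fun z => (∑ i, ∑ j, A2 i j z * pd i (pd j f) z)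
      + (∑ i, A1 i z * pd i f z) + A0 z * f z) from rfl]
    rw [pd_add m (f := fun z => (∑ i, ∑ j, A2 i j z * pd i (pd j f) z) + (∑ i, A1 i z * pd i f z))
      (g := fun z => A0 z * f z) (cdiff (by fun_prop) y) (cdiff (by fun_prop) y)]
    rw [pd_add m (f := fun z => ∑ i, ∑ j, A2 i j z * pd i (pd j f) z)
      (g := fun z => ∑ i, A1 i z * pd i f z) (cdiff (by fun_prop) y) (cdiff (by fun_prop) y)]
    rw [pd_mul m (cdiff hA0 y) (cdiff hf y)]
    rw [pd_sum m Finset.univ (F := fun i z => ∑ j, A2 i j z * pd i (pd j f) z)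
      (fun i _ => cdiff (by fun_prop) y)]
    rw [pd_sum m Finset.univ (F := fun i z => A1 i z * pd i f z)
      (fun i _ => cdiff (by fun_prop) y)]
    congr 2
    · refine Finset.sum_congr rfl fun i _ => ?_
      rw [pd_sum m Finset.univ (F := fun j z => A2 i j z * pd i (pd j f) z)
        (fun j _ => cdiff (by fun_prop) y)]
      exact Finset.sum_congr rfl fun j _ =>
        pd_mul m (cdiff (hA2 i j) y) (cdiff (contDiff_pd (contDiff_pd hf j) i) y)
    · exact Finset.sum_congr rfl fun i _ =>
        pd_mul m (cdiff (hA1 i) y) (cdiff (contDiff_pd hf i) y)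
  -- First derivative of the Lie derivative of f
  have E2 : ∀ (l : ℝ) (j : Fin n) (y : Fin n → ℝ),
      pd j (lieF X l f) y
      = (∑ k, (pd j (X k) y * pd k f y + X k y * pd j (pd k f) y))
        + l * (pd j (divg X) y * f y + divg X y * pd j f y) := by
    intro l j y
    rw [show lieF X l f = (fun z => (∑ k, X k z * pd k f z) + l * divg X z * f z) from rfl]
    rw [pd_add j (f := fun z => ∑ k, X k z * pd k f z) (g := fun z => l * divg X z * f z)
      (cdiff (by fun_prop) y) (cdiff (by fun_prop) y)]
    rw [pd_sum j Finset.univ (F := fun k z => X k z * pd k f z)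
      (fun k _ => cdiff (by fun_prop) y)]
    have hG : pd j (fun z => l * divg X z * f z) y
        = (l * pd j (divg X) y) * f y + (l * divg X y) * pd j f y := by
      rw [show (fun z => l * divg X z * f z) = fun z => (fun w => l * divg X w) z * f z from rfl]
      rw [pd_mul j (cdiff (by fun_prop) y) (cdiff hf y), pd_const_mul j l (cdiff hdvg y)]
    rw [hG, Finset.sum_congr rfl (fun k _ =>
      pd_mul j (cdiff (hX k) y) (cdiff (contDiff_pd hf k) y))]
    ring
  -- Second derivative of the Lie derivative of f
  have E3 : ∀ (l : ℝ) (i j : Fin n) (y : Fin n → ℝ),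
      pd i (pd j (lieF X l f)) y
      = (∑ k, (pd i (pd j (X k)) y * pd k f y + pd j (X k) y * pd i (pd k f) y
          + (pd i (X k) y * pd j (pd k f) y + X k y * pd i (pd j (pd k f)) y)))
        + l * ((pd i (pd j (divg X)) y * f y + pd j (divg X) y * pd i f y)
          + (pd i (divg X) y * pd j f y + divg X y * pd i (pd j f) y)) := by
    intro l i j y
    rw [show pd j (lieF X l f)
        = fun y => (∑ k, (pd j (X k) y * pd k f y + X k y * pd j (pd k f) y))
          + l * (pd j (divg X) y * f y + divg X y * pd j f y) from funext (E2 l j)]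
    rw [pd_add i
      (f := fun y => ∑ k, (pd j (X k) y * pd k f y + X k y * pd j (pd k f) y))
      (g := fun y => l * (pd j (divg X) y * f y + divg X y * pd j f y))
      (cdiff (by fun_prop) y) (cdiff (by fun_prop) y)]
    rw [pd_sum i Finset.univ
      (F := fun k y => pd j (X k) y * pd k f y + X k y * pd j (pd k f) y)
      (fun k _ => cdiff (by fun_prop) y)]
    rw [pd_const_mul i l
      (f := fun y => pd j (divg X) y * f y + divg X y * pd j f y) (cdiff (by fun_prop) y)]
    rw [pd_add i (f := fun y => pd j (divg X) y * f y) (g := fun y => divg X y * pd j f y)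
      (cdiff (by fun_prop) y) (cdiff (by fun_prop) y)]
    rw [pd_mul i (cdiff (contDiff_pd hdvg j) y) (cdiff hf y)]
    rw [pd_mul i (cdiff hdvg y) (cdiff (contDiff_pd hf j) y)]
    have hterm : ∀ k : Fin n,
        pd i (fun y => pd j (X k) y * pd k f y + X k y * pd j (pd k f) y) y
        = pd i (pd j (X k)) y * pd k f y + pd j (X k) y * pd i (pd k f) y
          + (pd i (X k) y * pd j (pd k f) y + X k y * pd i (pd j (pd k f)) y) := by
      intro k
      rw [pd_add i (f := fun y => pd j (X k) y * pd k f y)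
        (g := fun y => X k y * pd j (pd k f) y) (cdiff (by fun_prop) y) (cdiff (by fun_prop) y),
        pd_mul i (cdiff (contDiff_pd (hX k) j) y) (cdiff (contDiff_pd hf k) y),
        pd_mul i (cdiff (hX k) y) (cdiff (contDiff_pd (contDiff_pd hf k) j) y)]
    rw [Finset.sum_congr rfl (fun k _ => hterm k)]
  -- Now unfold and do the algebra
  simp only [lieF, op2, lieS1, lieS2]
  simp only [E1, E2, E3]
  simp only [Finset.mul_sum, Finset.sum_mul, mul_add, add_mul, mul_sub, sub_mul,
    Finset.sum_add_distrib, Finset.sum_sub_distrib]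
  ring_nf
  have hA : ∑ a, ∑ b, ∑ c, X a x * pd a (A2 b c) x * pd b (pd c f) x
      = ∑ a, ∑ b, ∑ c, X c x * pd c (A2 a b) x * pd a (pd b f) x :=
    comm3 (fun a b c => X a x * pd a (A2 b c) x * pd b (pd c f) x)
  have hC : ∑ a, ∑ b, ∑ c, X a x * A2 b c x * pd a (pd b (pd c f)) x
      = ∑ a, ∑ b, ∑ c, A2 a b x * X c x * pd a (pd b (pd c f)) x := by
    refine (comm3 (fun a b c => X a x * A2 b c x * pd a (pd b (pd c f)) x)).trans (congr3 ?_)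
    intro a b c
    rw [pd3_rot hf c a b]; ring
  have hD : ∑ a, ∑ b, ∑ c, A2 a b x * pd b (X c) x * pd a (pd c f) x
      = ∑ a, ∑ b, ∑ c, A2 a c x * pd c (X b) x * pd a (pd b f) x :=
    Finset.sum_congr rfl fun a _ => Finset.sum_comm
  have hE : ∑ a, ∑ b, ∑ c, A2 a b x * pd a (X c) x * pd b (pd c f) x
      = ∑ a, ∑ b, ∑ c, A2 c b x * pd c (X a) x * pd a (pd b f) x := by
    refine (hswap3 (fun a b c => A2 a b x * pd a (X c) x * pd b (pd c f) x)).trans (congr3 ?_)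
    intro a b c
    rw [pd2_swap hf b a]
  have hF : ∑ a, ∑ b, ∑ c, A2 a b x * pd a (pd b (X c)) x * pd c f x
      = ∑ a, ∑ b, ∑ c, A2 b c x * pd b (pd c (X a)) x * pd a f x :=
    comm3' (fun a b c => A2 a b x * pd a (pd b (X c)) x * pd c f x)
  have hG : (∑ a, ∑ b, A2 a b x * lam * pd b (divg X) x * pd a f x)
        + (∑ a, ∑ b, A2 a b x * lam * pd a (divg X) x * pd b f x)
      = ∑ a, ∑ b, lam * 2 * A2 b a x * pd b (divg X) x * pd a f x := by
    have h2 : (∑ a, ∑ b, A2 a b x * lam * pd a (divg X) x * pd b f x)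
        = ∑ a, ∑ b, A2 b a x * lam * pd b (divg X) x * pd a f x := Finset.sum_comm
    rw [h2, ← Finset.sum_add_distrib]
    refine Finset.sum_congr rfl fun a _ => ?_
    rw [← Finset.sum_add_distrib]
    refine Finset.sum_congr rfl fun b _ => ?_
    have := congrFun (hA2sym a b) x
    rw [this]; ring
  have h7 : ∑ a, ∑ b, X a x * pd a (A1 b) x * pd b f x
      = ∑ a, ∑ b, X b x * pd b (A1 a) x * pd a f x := Finset.sum_comm
  have h8 : ∑ a, ∑ b, X a x * A1 b x * pd a (pd b f) x
      = ∑ a, ∑ b, A1 a x * X b x * pd a (pd b f) x := by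
    refine Finset.sum_comm.trans (congr2 ?_)
    intro a b
    rw [pd2_swap hf a b]; ring
  have h9 : ∑ a, X a x * A0 x * pd a f x = ∑ a, A0 x * X a x * pd a f x :=
    Finset.sum_congr rfl fun a _ => by ring
  have h17 : ∑ a, ∑ b, A2 a b x * lam * divg X x * pd a (pd b f) x
      = ∑ a, ∑ b, divg X x * lam * A2 a b x * pd a (pd b f) x :=
    congr2 fun a b => by ring
  have h18 : ∑ a, ∑ b, A1 a x * pd a (X b) x * pd b f x
      = ∑ a, ∑ b, A1 b x * pd b (X a) x * pd a f x := Finset.sum_comm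
  have h20 : ∑ a, A1 a x * lam * pd a (divg X) x * f x
      = ∑ a, lam * A1 a x * pd a (divg X) x * f x :=
    Finset.sum_congr rfl fun a _ => by ring
  have h21 : ∑ a, A1 a x * lam * divg X x * pd a f x
      = ∑ a, divg X x * lam * A1 a x * pd a f x :=
    Finset.sum_congr rfl fun a _ => by ring
  have h14 : ∑ a, ∑ b, A2 a b x * lam * pd a (pd b (divg X)) x * f x
      = ∑ a, ∑ b, lam * A2 a b x * pd a (pd b (divg X)) x * f x :=
    congr2 fun a b => by ring
  linear_combination (norm := (ring_nf; simp only [mul_comm, mul_assoc, mul_left_comm]; ring_nf)) hA + hC + h8 + h9 + h7 - hD - hE - hF - hG - h17 - h18 - h20 - h21 - h14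

end Inv

open Inv

/-- action of the inversion `X̄_r` on a second-order operator:
`L_{X̄_r}^μ ∘ A − A ∘ L_{X̄_r}^λ` is the second-order operator with coefficients
`Ã₂^{ij} = (L^δ A₂)^{ij}`,
`Ã₁^i = (L^δ A₁)^i − 2 δ^i_r g_{kℓ} A₂^{kℓ} + 4(1+nλ) g_{ar} A₂^{ai}`,
`Ã₀ = L^δ A₀ + 2nλ g_{ar} A₁^a`. -/
theorem inversion_action_on_operators
    (p q n : ℕ) (hpq : n = p + q) (lam mu dlt : ℝ) (hdlt : dlt = mu - lam)
    (r : Fin n)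
    (A2 : Fin n → Fin n → (Fin n → ℝ) → ℝ)
    (A1 : Fin n → (Fin n → ℝ) → ℝ) (A0 : (Fin n → ℝ) → ℝ)
    (hA2 : ∀ i j, ContDiff ℝ (⊤ : ℕ∞) (A2 i j)) (hA2sym : ∀ i j, A2 i j = A2 j i)
    (hA1 : ∀ i, ContDiff ℝ (⊤ : ℕ∞) (A1 i)) (hA0 : ContDiff ℝ (⊤ : ℕ∞) A0)
    (f : (Fin n → ℝ) → ℝ) (hf : ContDiff ℝ (⊤ : ℕ∞) f) (x : Fin n → ℝ) :
    lieF (invX p r) mu (op2 A2 A1 A0 f) x - op2 A2 A1 A0 (lieF (invX p r) lam f) x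
      = op2 (lieS2 (invX p r) dlt A2)
          (fun i y => lieS1 (invX p r) dlt A1 i y
            - 2 * (if i = r then 1 else 0) * (∑ k, ∑ l, gmet p k l * A2 k l y)
            + 4 * (1 + (n : ℝ) * lam) * (∑ a, gmet p a r * A2 a i y))
          (fun y => lieF (invX p r) dlt A0 y
            + 2 * (n : ℝ) * lam * (∑ a, gmet p a r * A1 a y))
          f x := by
  subst hdlt
  rw [commutator (invX p r) (contDiff_invX p r) lam mu A2 A1 A0 hA2 hA2sym hA1 hA0 f hf x]
  have hC1 : (fun (i : Fin n) (y : Fin n → ℝ) => lieS1 (invX p r) (mu - lam) A1 i y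
        - (∑ j, ∑ k, A2 j k y * pd j (pd k (invX p r i)) y)
        - 2 * lam * (∑ j, A2 j i y * pd j (divg (invX p r)) y))
      = (fun i y => lieS1 (invX p r) (mu - lam) A1 i y
        - 2 * (if i = r then 1 else 0) * (∑ k, ∑ l, gmet p k l * A2 k l y)
        + 4 * (1 + (n : ℝ) * lam) * (∑ a, gmet p a r * A2 a i y)) := by
    funext i y
    have hsym : A2 i r y = A2 r i y := congrFun (hA2sym i r) y
    simp only [pd_pd_invX, pd_divg_invX, gmet]
    simp only [mul_sub, mul_add, mul_ite, ite_mul, mul_zero, zero_mul, mul_one, one_mul,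
      Finset.sum_sub_distrib, Finset.sum_add_distrib, Finset.sum_ite_eq, Finset.sum_ite_eq',
      Finset.mem_univ, if_true, Finset.sum_ite_irrel, Finset.sum_const_zero]
    by_cases hir : i = r <;> simp only [hir, if_true, if_pos, if_neg, ite_true, ite_false] <;>
      ring_nf
    · have hs : ∑ z : Fin n, A2 z z y * sgn p z * 2 = (∑ z : Fin n, sgn p z * A2 z z y) * 2 := by
        rw [Finset.sum_mul]
        exact Finset.sum_congr rfl fun z _ => by ring
      rw [hs]; ring
    · linear_combination 2 * sgn p r * hsym
  have hC0 : (fun (y : Fin n → ℝ) => lieF (invX p r) (mu - lam) A0 y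
        - lam * (∑ i, ∑ j, A2 i j y * pd i (pd j (divg (invX p r))) y)
        - lam * (∑ i, A1 i y * pd i (divg (invX p r)) y))
      = (fun y => lieF (invX p r) (mu - lam) A0 y
        + 2 * (n : ℝ) * lam * (∑ a, gmet p a r * A1 a y)) := by
    funext y
    simp only [pd_pd_divg_invX, pd_divg_invX, gmet]
    simp only [mul_zero, zero_mul, Finset.sum_const_zero, mul_ite, ite_mul, mul_one,
      Finset.sum_ite_eq, Finset.sum_ite_eq', Finset.mem_univ, if_true]
    ring_nf
  rw [hC1, hC0]
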